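/- Let A and B be finite alphabets, let α, β : B* → A* be monoid homomorphisms mapping each letter of B to a word of length at most 1, and let k ≥ 1. Suppose w ∈ B* is a word such that every factor f of w with |f| ≥ k satisfies α(f) ≠ ε and β(f) ≠ ε, and suppose β(w) ≠ ε. Then |α(w)| ≤ 2k·|β(w)|. -/
import Mathlib


/-- Extension of a letter map `B → A*` to the induced monoid map `B* → A*`. -/
def strMap {B A : Type} (α : B → List A) (w : List B) : List A :=
  (w.map α).flatten

lemma strMap_append {B A : Type} (β : B → List A) (u v : List B) :
    strMap β (u ++ v) = strMap β u ++ strMap β v := by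
  simp [strMap]

lemma aux_len {A B : Type} (β : B → List A) (k : ℕ) (hk : 1 ≤ k) :
    ∀ n (w : List B), w.length ≤ n →
      (∀ g : List B, g <:+: w → k ≤ g.length → strMap β g ≠ []) →
      strMap β w ≠ [] → w.length ≤ 2 * k * (strMap β w).length := by
  intro n
  induction n with
  | zero =>
    intro w hw _ hne
    have : w = [] := List.length_eq_zero_iff.mp (Nat.le_zero.mp hw)
    subst this
    simp [strMap] at hne
  | succ n ih =>
    intro w hw hfac hne
    by_cases hwk : w.length < k
    · have h1 : 1 ≤ (strMap β w).length := List.length_pos_iff.mpr hne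
      nlinarith
    · push_neg at hwk
      have htd : w.take k ++ w.drop k = w := List.take_append_drop k w
      have htlen : (w.take k).length = k := by
        simp [List.length_take, min_eq_left hwk]
      have hβt : strMap β (w.take k) ≠ [] :=
        hfac _ (w.take_prefix k).isInfix (by rw [htlen])
      have hsplit : strMap β w = strMap β (w.take k) ++ strMap β (w.drop k) := by
        conv_lhs => rw [← htd]
        exact strMap_append β _ _
      have hwlen : w.length = k + (w.drop k).length := by
        simp [List.length_drop]; omega
      by_cases hβd : strMap β (w.drop k) = []
      · have hdk : (w.drop k).length < k := by
          by_contra h; push_neg at h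
          exact hfac _ (w.drop_suffix k).isInfix h hβd
        have h1 : 1 ≤ (strMap β w).length := List.length_pos_iff.mpr hne
        nlinarith
      · have ihd := ih (w.drop k) (by simp [List.length_drop]; omega)
          (fun g hg hgk => hfac g (hg.trans (w.drop_suffix k).isInfix) hgk) hβd
        have h1 : 1 ≤ (strMap β (w.take k)).length := List.length_pos_iff.mpr hβt
        rw [hsplit, List.length_append]
        nlinarith

lemma strMap_len_le {A B : Type} (α : B → List A) (hα : ∀ b : B, (α b).length ≤ 1)
    (w : List B) : (strMap α w).length ≤ w.length := by
  induction w with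
  | nil => simp [strMap]
  | cons b t ihw =>
    have : strMap α (b :: t) = α b ++ strMap α t := by simp [strMap]
    rw [this, List.length_append]
    have := hα b
    simp only [List.length_cons]
    omega

/-- If `α, β` are alphabetic morphisms, `k ≥ 1`, and `w` is a
word all of whose factors of length `≥ k` have nonempty images under both `α`
and `β`, and `β(w) ≠ ε`, then `|α(w)| ≤ 2k·|β(w)|`. -/
theorem stmt2 {A B : Type} [Fintype A] [Fintype B] (α β : B → List A)
    (hα : ∀ b : B, (α b).length ≤ 1) (hβ : ∀ b : B, (β b).length ≤ 1)
    (k : ℕ) (hk : 1 ≤ k) (w : List B)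
    (hfac : ∀ g : List B, g <:+: w → k ≤ g.length →
      strMap α g ≠ [] ∧ strMap β g ≠ [])
    (hβw : strMap β w ≠ []) :
    (strMap α w).length ≤ 2 * k * (strMap β w).length := by
  have h1 := strMap_len_le α hα w
  have h2 := aux_len β k hk w.length w le_rfl
    (fun g hg hgk => (hfac g hg hgk).2) hβw
  omega
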